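/- arXiv:math/0603542 — 4 statements merged into one kernel-verified Lean document; each statement's English description precedes it below -/
import Mathlib

section
/- The Euler adic transformation T is ergodic with respect to the symmetric measure η: for every Borel set A ⊆ X such that for all x ∈ X \ X_max one has x ∈ A if and only if T(x) ∈ A, either η(A) = 0 or η(A) = 1. -/
open MeasureTheory Filter
open scoped ENNReal

/-- The Euler path space: a point is an infinite edge path in the Euler graph,
`x n : Fin (n+2)` being the label of the edge chosen from level `n` to level `n+1`. -/
abbrev EulerPath : Type := ∀ n : ℕ, Fin (n + 2)

/-- Vertex labels: `kv x n` is the `k` with the path `x` passing through vertex `(n,k)`.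
A label `(x n : ℕ) ≤ kv x n` is a left turn (edge to `(n+1, kv x n)`), a larger label
is a right turn (edge to `(n+1, kv x n + 1)`). -/
def kv (x : EulerPath) : ℕ → ℕ
  | 0 => 0
  | n + 1 => if (x n : ℕ) ≤ kv x n then kv x n else kv x n + 1

/-- The symmetric measure: the product over `n` of the uniform probability measures on
`Fin (n+2)`, characterized as the probability measure giving each cylinder of length `n`
the measure `∏_{i<n} 1/(i+2)`. -/
def IsSymmetricMeasure (η : Measure EulerPath) : Prop :=
  IsProbabilityMeasure η ∧
    ∀ (n : ℕ) (c : EulerPath),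
      η {x | ∀ i < n, x i = c i} = ∏ i ∈ Finset.range n, ((i : ℝ≥0∞) + 2)⁻¹

/-- The strict partial order on paths: `x` is less than `y` if they eventually agree,
pass through the same vertex just after the last disagreement, and at the last
disagreement the edge of `x` strictly precedes the edge of `y` in the order on edges
into that common vertex: the right edges (those from the source with the smaller
vertex label) come before the left edges, and edges with the same source are ordered
by their outgoing labels. -/
def pathLT (x y : EulerPath) : Prop :=
  ∃ N, (∀ n, N < n → x n = y n) ∧ kv x (N + 1) = kv y (N + 1) ∧
    (kv x N < kv y N ∨ (kv x N = kv y N ∧ (x N : ℕ) < (y N : ℕ)))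

/-- The set of maximal paths. -/
def Xmax : Set EulerPath := {x | ¬ ∃ y, pathLT x y}

/-- The set of minimal paths. -/
def Xmin : Set EulerPath := {x | ¬ ∃ y, pathLT y x}

/-- `x j` is the largest edge into the vertex `(j+1, kv x (j+1))`: either it is the left
edge with the largest label, or it is the unique edge into the vertex `(j+1, j+1)`. -/
def IsMaxEdge (x : EulerPath) (j : ℕ) : Prop :=
  (x j : ℕ) = kv x j ∨ kv x (j + 1) = j + 1

instance (x : EulerPath) (j : ℕ) : Decidable (IsMaxEdge x j) := by
  unfold IsMaxEdge; infer_instance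

open scoped Classical

/-- The Euler adic transformation: if `j` is the least index such that `x j` is not the
largest edge into `(j+1, kv x (j+1))`, then `T x` agrees with `x` in coordinates `> j`,
has as `j`-th edge the next larger edge into `(j+1, kv x (j+1))` (the next right edge if
`x j` is a right edge that is not the last one, the first left edge if `x j` is the last
right edge, and the next left edge if `x j` is a left edge), and its first `j` edges
form the minimal path from the root `(0,0)` to the source vertex `(j, k')` of that edge
(which goes through `(i, max (k' - (j - i)) 0)` at each level `i ≤ j`, always using the
minimal edge). On paths all of whose edges are maximal, `T` is defined as the identity. -/
noncomputable def eulerAdic (x : EulerPath) : EulerPath :=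
  if h : ∃ j, ¬ IsMaxEdge x j then
    let j := Nat.find h
    -- the source vertex `(j, k')` of the next larger edge into `(j+1, kv x (j+1))`
    let k' := if (x j : ℕ) = j + 1 then kv x (j + 1) else kv x j
    fun n =>
      if j < n then x n
      else if hn : n = j then
        -- the next larger edge into `(j+1, kv x (j+1))`
        ⟨if (x j : ℕ) = j + 1 then 0 else (x j : ℕ) + 1, by
          have h2 := (x j).isLt
          split_ifs with h' <;> omega⟩
      else
        -- the minimal path from the root `(0,0)` to the vertex `(j, k')`
        ⟨(if n + 1 ≤ j - k' then 0 else k' + n + 1 - j) % (n + 2),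
          Nat.mod_lt _ (by omega)⟩
  else x

/-!
Two paths that coincide beyond level `N` and pass through the same vertex at level `N` lie
in one class: iterating `T` from either of them increases a base-`(2N+4)` potential until it
reaches the unique path of the class whose first `N` edges are maximal. So the invariant set
`A` is a union of classes.

Under `η` the edges are independent and uniform, and at level `n` the path takes the left edge
with the largest label (label `kv x n`) with probability `1/(n+2)` whatever happened before,
hence almost surely infinitely often. Couple `x` with the path having the same edges except that
the first `N` are reset to `0`: at every such level the gap between their vertex labels drops,
so they eventually meet, and then `x ∈ A` iff the reset path is in `A`. Thus `A` agrees a.e. with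
a tail event, and Kolmogorov's 0-1 law applies.
-/

open Finset

lemma kv_succ (x : EulerPath) (n : ℕ) :
    kv x (n + 1) = if (x n : ℕ) ≤ kv x n then kv x n else kv x n + 1 := rfl

lemma kv_le (x : EulerPath) : ∀ n, kv x n ≤ n
  | 0 => le_rfl
  | n + 1 => by
    have := kv_le x n
    rw [kv_succ]; split <;> omega

lemma dependsOn_kv (n : ℕ) : DependsOn (fun x : EulerPath => kv x n) (Set.Iio n) := by
  induction n with
  | zero => exact fun _ _ _ => rfl
  | succ n ih =>
    intro x y h
    have hkv : kv x n = kv y n := ih fun i hi => h i (Nat.lt_succ_of_lt hi)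
    simp only [kv_succ, h n n.lt_succ_self, hkv]

lemma kv_top {x : EulerPath} {n : ℕ} (h : kv x (n + 1) = n + 1) :
    kv x n = n ∧ (x n : ℕ) = n + 1 := by
  have := kv_le x n
  have := (x n).isLt
  rw [kv_succ] at h
  split at h <;> omega

def TailEquiv (N : ℕ) (x y : EulerPath) : Prop :=
  (∀ n, N ≤ n → x n = y n) ∧ kv x N = kv y N

namespace TailEquiv

variable {N : ℕ} {x y z : EulerPath}

lemma refl (N : ℕ) (x : EulerPath) : TailEquiv N x x := ⟨fun _ _ => rfl, rfl⟩

lemma symm (h : TailEquiv N x y) : TailEquiv N y x :=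
  ⟨fun n hn => (h.1 n hn).symm, h.2.symm⟩

lemma trans (h₁ : TailEquiv N x y) (h₂ : TailEquiv N y z) : TailEquiv N x z :=
  ⟨fun n hn => (h₁.1 n hn).trans (h₂.1 n hn), h₁.2.trans h₂.2⟩

lemma kv_eq (h : TailEquiv N x y) {n : ℕ} (hn : N ≤ n) : kv x n = kv y n := by
  induction n, hn using Nat.le_induction with
  | base => exact h.2
  | succ n hn ih => rw [kv_succ, kv_succ, ih, h.1 n hn]

lemma of_isMaxEdge (h : TailEquiv (N + 1) x y) (hx : IsMaxEdge x N) (hy : IsMaxEdge y N) :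
    TailEquiv N x y := by
  suffices kv x N = kv y N ∧ x N = y N from
    ⟨fun n hn => hn.eq_or_lt.elim (· ▸ this.2) (h.1 n ·), this.1⟩
  by_cases htop : kv x (N + 1) = N + 1
  · obtain ⟨hx₁, hx₂⟩ := kv_top htop
    obtain ⟨hy₁, hy₂⟩ := kv_top (h.2 ▸ htop)
    exact ⟨by omega, Fin.ext (by omega)⟩
  · have hx' : (x N : ℕ) = kv x N := hx.resolve_right htop
    have hy' : (y N : ℕ) = kv y N := hy.resolve_right (h.2 ▸ htop)
    have h₂ := h.2
    rw [kv_succ, kv_succ, if_pos hx'.le, if_pos hy'.le] at h₂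
    exact ⟨h₂, Fin.ext (by omega)⟩

lemma eq_of_isMaxEdge (h : TailEquiv N x y) (hx : ∀ n < N, IsMaxEdge x n)
    (hy : ∀ n < N, IsMaxEdge y n) : x = y := by
  have h₀ : TailEquiv 0 x y := by
    induction N with
    | zero => exact h
    | succ N ih =>
      exact ih (h.of_isMaxEdge (hx N N.lt_succ_self) (hy N N.lt_succ_self))
        (fun n hn => hx n (by omega)) (fun n hn => hy n (by omega))
  exact funext fun n => h₀.1 n n.zero_le

end TailEquiv

lemma sum_mul_pow_lt_pow {C j : ℕ} {d : ℕ → ℕ} (hd : ∀ n < j, d n < C) :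
    ∑ n ∈ range j, d n * C ^ n < C ^ j := by
  induction j with
  | zero => simp
  | succ j ih =>
    have hj : d j + 1 ≤ C := hd j j.lt_succ_self
    calc ∑ n ∈ range (j + 1), d n * C ^ n
        = ∑ n ∈ range j, d n * C ^ n + d j * C ^ j := sum_range_succ _ _
      _ < C ^ j + d j * C ^ j := by gcongr; exact ih fun n hn => hd n (by omega)
      _ = (d j + 1) * C ^ j := by ring
      _ ≤ C ^ (j + 1) := by rw [pow_succ']; gcongr

/-- An order-preserving numbering of the edges into a vertex: right edges keep their label,
left edges are shifted above all of them. -/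
def edgeRank (x : EulerPath) (n : ℕ) : ℕ :=
  if (x n : ℕ) ≤ kv x n then x n + (n + 2) else x n

lemma edgeRank_lt (x : EulerPath) (n : ℕ) : edgeRank x n < 2 * n + 4 := by
  have := (x n).isLt
  unfold edgeRank; split <;> omega

def adicPotential (N : ℕ) (x : EulerPath) : ℕ :=
  ∑ n ∈ range N, edgeRank x n * (2 * N + 4) ^ n

lemma adicPotential_lt (N : ℕ) (x : EulerPath) : adicPotential N x < (2 * N + 4) ^ N :=
  sum_mul_pow_lt_pow fun n hn => (edgeRank_lt x n).trans_le (by omega)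

section eulerAdic

variable {x : EulerPath} (hx : ∃ j, ¬ IsMaxEdge x j)

/-- The `k'` in the definition of `eulerAdic`. -/
noncomputable def adicSource : ℕ :=
  if (x (Nat.find hx) : ℕ) = Nat.find hx + 1 then kv x (Nat.find hx + 1) else kv x (Nat.find hx)

include hx

lemma not_isMaxEdge_find :
    (x (Nat.find hx) : ℕ) ≠ kv x (Nat.find hx) ∧ kv x (Nat.find hx + 1) ≠ Nat.find hx + 1 :=
  not_or.mp (Nat.find_spec hx)

lemma adicSource_le : adicSource hx ≤ Nat.find hx := by
  have := not_isMaxEdge_find hx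
  have := kv_le x (Nat.find hx)
  have := kv_le x (Nat.find hx + 1)
  unfold adicSource; split <;> omega

lemma eulerAdic_of_find_lt {n : ℕ} (h : Nat.find hx < n) : eulerAdic x n = x n := by
  rw [eulerAdic, dif_pos hx]
  simp only [if_pos h]

lemma val_eulerAdic_find :
    (eulerAdic x (Nat.find hx) : ℕ) =
      if (x (Nat.find hx) : ℕ) = Nat.find hx + 1 then 0 else (x (Nat.find hx) : ℕ) + 1 := by
  rw [eulerAdic, dif_pos hx]
  simp

lemma val_eulerAdic_of_lt_find {n : ℕ} (h : n < Nat.find hx) :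
    (eulerAdic x n : ℕ) =
      if n + 1 ≤ Nat.find hx - adicSource hx then 0 else adicSource hx + n + 1 - Nat.find hx := by
  have := adicSource_le hx
  rw [eulerAdic, dif_pos hx]
  simp only [if_neg h.not_gt, dif_neg h.ne]
  change (if n + 1 ≤ Nat.find hx - adicSource hx then 0
    else adicSource hx + n + 1 - Nat.find hx) % (n + 2) = _
  split
  · simp
  · exact Nat.mod_eq_of_lt (by omega)

/-- Below level `j`, `eulerAdic x` is the minimal path to `(j, adicSource hx)`. -/
lemma kv_eulerAdic_of_le_find {n : ℕ} (hn : n ≤ Nat.find hx) :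
    kv (eulerAdic x) n = adicSource hx - (Nat.find hx - n) := by
  have := adicSource_le hx
  induction n with
  | zero => change 0 = _; omega
  | succ n ih =>
    rw [kv_succ, val_eulerAdic_of_lt_find hx (by omega), ih (by omega)]
    split <;> split <;> omega

lemma kv_eulerAdic_find : kv (eulerAdic x) (Nat.find hx) = adicSource hx := by
  have := kv_eulerAdic_of_le_find hx le_rfl
  have := adicSource_le hx
  omega

lemma kv_eulerAdic_find_succ : kv (eulerAdic x) (Nat.find hx + 1) = kv x (Nat.find hx + 1) := by
  have := not_isMaxEdge_find hx
  have := kv_le x (Nat.find hx)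
  have := (x (Nat.find hx)).isLt
  rw [kv_succ, kv_eulerAdic_find hx, val_eulerAdic_find hx, adicSource, kv_succ x (Nat.find hx)]
  split_ifs <;> omega

lemma tailEquiv_eulerAdic {N : ℕ} (hN : Nat.find hx < N) : TailEquiv N x (eulerAdic x) := by
  have h : TailEquiv (Nat.find hx + 1) x (eulerAdic x) :=
    ⟨fun n hn => (eulerAdic_of_find_lt hx hn).symm, (kv_eulerAdic_find_succ hx).symm⟩
  exact ⟨fun n hn => h.1 n (by omega), h.kv_eq hN⟩

lemma pathLT_eulerAdic : pathLT x (eulerAdic x) := by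
  refine ⟨Nat.find hx, fun n hn => (eulerAdic_of_find_lt hx hn).symm,
    (kv_eulerAdic_find_succ hx).symm, ?_⟩
  have := not_isMaxEdge_find hx
  have := kv_le x (Nat.find hx)
  have := (x (Nat.find hx)).isLt
  have hsrc := kv_eulerAdic_find hx
  have hval := val_eulerAdic_find hx
  have hsucc := kv_succ x (Nat.find hx)
  rw [adicSource] at hsrc
  split_ifs at hsrc hval hsucc <;> omega

lemma notMem_Xmax_of_not_isMaxEdge : x ∉ Xmax := fun h => h ⟨_, pathLT_eulerAdic hx⟩

lemma edgeRank_eulerAdic_of_find_lt {n : ℕ} (h : Nat.find hx < n) :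
    edgeRank (eulerAdic x) n = edgeRank x n := by
  rw [edgeRank, edgeRank, eulerAdic_of_find_lt hx h,
    ((tailEquiv_eulerAdic hx (Nat.lt_succ_self _)).kv_eq h).symm]

lemma edgeRank_lt_edgeRank_eulerAdic_find :
    edgeRank x (Nat.find hx) < edgeRank (eulerAdic x) (Nat.find hx) := by
  have := not_isMaxEdge_find hx
  have := kv_le x (Nat.find hx)
  have := (x (Nat.find hx)).isLt
  have hsrc := kv_eulerAdic_find hx
  have hsucc := kv_succ x (Nat.find hx)
  rw [adicSource] at hsrc
  rw [edgeRank, edgeRank, hsrc, val_eulerAdic_find hx]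
  split_ifs at hsucc ⊢ <;> omega

lemma adicPotential_lt_eulerAdic {N : ℕ} (hN : Nat.find hx < N) :
    adicPotential N x < adicPotential N (eulerAdic x) := by
  set j := Nat.find hx
  set C := 2 * N + 4
  have hsplit : ∀ y : EulerPath, adicPotential N y = ∑ n ∈ range j, edgeRank y n * C ^ n +
      edgeRank y j * C ^ j + ∑ n ∈ Ico (j + 1) N, edgeRank y n * C ^ n := fun y => by
    rw [adicPotential, ← sum_range_succ, sum_range_add_sum_Ico _ (by omega)]
  have hlow : ∑ n ∈ range j, edgeRank x n * C ^ n < C ^ j :=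
    sum_mul_pow_lt_pow fun n _ => (edgeRank_lt x n).trans_le (by omega)
  have hhigh : ∑ n ∈ Ico (j + 1) N, edgeRank x n * C ^ n =
      ∑ n ∈ Ico (j + 1) N, edgeRank (eulerAdic x) n * C ^ n :=
    sum_congr rfl fun n hn => by
      rw [edgeRank_eulerAdic_of_find_lt hx (by simp at hn; omega)]
  have hj : (edgeRank x j + 1) * C ^ j ≤ edgeRank (eulerAdic x) j * C ^ j :=
    Nat.mul_le_mul_right _ (edgeRank_lt_edgeRank_eulerAdic_find hx)
  rw [add_one_mul] at hj
  rw [hsplit x, hsplit (eulerAdic x), hhigh]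
  omega

end eulerAdic

section invariant

variable {A : Set EulerPath} (hinv : ∀ x, x ∉ Xmax → (x ∈ A ↔ eulerAdic x ∈ A))
include hinv

/-- Iterate `eulerAdic`: it stays in the class of `x` and increases `adicPotential`. -/
theorem exists_tailEquiv_isMaxEdge (N : ℕ) (x : EulerPath) :
    ∃ z, TailEquiv N x z ∧ (∀ n < N, IsMaxEdge z n) ∧ (x ∈ A ↔ z ∈ A) := by
  by_cases hmax : ∀ n < N, IsMaxEdge x n
  · exact ⟨x, .refl N x, hmax, Iff.rfl⟩
  push Not at hmax
  obtain ⟨n, hnN, hn⟩ := hmax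
  have hx : ∃ j, ¬ IsMaxEdge x j := ⟨n, hn⟩
  have hjN : Nat.find hx < N := (Nat.find_min' hx hn).trans_lt hnN
  obtain ⟨z, hz, hzmax, hzA⟩ := exists_tailEquiv_isMaxEdge N (eulerAdic x)
  exact ⟨z, (tailEquiv_eulerAdic hx hjN).trans hz, hzmax,
    (hinv x (notMem_Xmax_of_not_isMaxEdge hx)).trans hzA⟩
termination_by (2 * N + 4) ^ N - adicPotential N x
decreasing_by
  have := adicPotential_lt_eulerAdic hx hjN
  have := adicPotential_lt N (eulerAdic x)
  omega

theorem mem_iff_of_tailEquiv {N : ℕ} {x y : EulerPath} (h : TailEquiv N x y) :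
    x ∈ A ↔ y ∈ A := by
  obtain ⟨zx, hx, hxmax, hxA⟩ := exists_tailEquiv_isMaxEdge hinv N x
  obtain ⟨zy, hy, hymax, hyA⟩ := exists_tailEquiv_isMaxEdge hinv N y
  have : zx = zy := (hx.symm.trans (h.trans hy)).eq_of_isMaxEdge hxmax hymax
  rw [hxA, this, hyA]

end invariant

open ProbabilityTheory

noncomputable def eulerUniform (n : ℕ) : Measure (Fin (n + 2)) := uniformOn Set.univ

instance (n : ℕ) : IsProbabilityMeasure (eulerUniform n) := by
  unfold eulerUniform; infer_instance

lemma eulerUniform_singleton (n : ℕ) (v : Fin (n + 2)) :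
    eulerUniform n {v} = ((n : ℝ≥0∞) + 2)⁻¹ := by
  simp [eulerUniform, uniformOn_univ]

lemma eulerUniform_setOf_ne (n : ℕ) (v : Fin (n + 2)) :
    eulerUniform n {w | w ≠ v} = (n + 1) / (n + 2) := by
  have : {w | w ≠ v} = ((univ.erase v : Finset (Fin (n + 2))) : Set (Fin (n + 2))) := by
    ext; simp
  rw [eulerUniform, uniformOn_univ, this, Measure.count_apply_finset]
  simp

namespace IsSymmetricMeasure

variable {η : Measure EulerPath} (hη : IsSymmetricMeasure η)
include hη

lemma map_restrict_range (n : ℕ) :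
    η.map (range n).restrict = Measure.pi fun i : range n => eulerUniform i := by
  refine Measure.ext_iff_singleton.mpr fun c => ?_
  let x : EulerPath := fun i => if h : i ∈ range n then c ⟨i, h⟩ else 0
  have hc : (range n).restrict (π := fun i => Fin (i + 2)) ⁻¹' {c} =
      {y | ∀ i < n, y i = x i} := by
    ext y
    simp +contextual [funext_iff, x]
  rw [Measure.map_apply (measurable_restrict _) (measurableSet_singleton c), hc, hη.2,
    Measure.pi_singleton]
  simp only [eulerUniform_singleton]
  exact (prod_coe_sort (range n) fun i => ((i : ℝ≥0∞) + 2)⁻¹).symm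

theorem eq_infinitePi : η = Measure.infinitePi eulerUniform := by
  refine IsProjectiveLimit.unique (fun I => ?_) (Measure.isProjectiveLimit_infinitePi eulerUniform)
  obtain ⟨n, hn⟩ : ∃ n, I ⊆ range n :=
    ⟨I.sup id + 1, fun i hi => mem_range.mpr (Nat.lt_succ_of_le (le_sup (f := id) hi))⟩
  rw [← restrict₂_comp_restrict hn, ← Measure.map_map (measurable_restrict₂ hn)
    (measurable_restrict _), hη.map_restrict_range,
    (isProjectiveMeasureFamily_pi eulerUniform (range n) I hn).symm]

end IsSymmetricMeasure

abbrev edgeSigma (n : ℕ) : MeasurableSpace EulerPath :=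
  MeasurableSpace.comap (fun x : EulerPath => x n) inferInstance

lemma edgeSigma_le (n : ℕ) : edgeSigma n ≤ MeasurableSpace.pi :=
  (measurable_pi_apply n).comap_le

lemma iIndep_edgeSigma : iIndep edgeSigma (Measure.infinitePi eulerUniform) :=
  (iIndepFun_iff_iIndep _ _ _).mp (iIndepFun_infinitePi (X := fun _ => id) fun _ => measurable_id)

lemma DependsOn.measurable_iSup_comap {ι β : Type*} {X : ι → Type*} [∀ i, MeasurableSpace (X i)]
    [∀ i, Countable (X i)] [∀ i, MeasurableSingletonClass (X i)] [MeasurableSpace β]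
    {f : (∀ i, X i) → β} {s : Set ι} [Finite s] (hf : DependsOn f s) :
    Measurable[⨆ i ∈ s, MeasurableSpace.comap (fun x => x i) inferInstance] f := by
  intro t _
  have hrestrict : Measurable[⨆ i ∈ s, MeasurableSpace.comap (fun x => x i) inferInstance]
      s.domRestrict := @measurable_pi_lambda _ _ _ (_) _ _ fun i =>
    (comap_measurable _).mono (le_iSup₂ (f := fun i (_ : i ∈ s) =>
      MeasurableSpace.comap (fun x : ∀ i, X i => x i) inferInstance) i i.2) le_rfl
  have hpre : f ⁻¹' t = s.domRestrict ⁻¹' (s.domRestrict '' (f ⁻¹' t)) := by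
    refine (Set.subset_preimage_image _ _).antisymm ?_
    rintro x ⟨y, hy, hyx⟩
    rw [Set.mem_preimage, hf fun i hi => (congrFun hyx ⟨i, hi⟩).symm]
    exact hy
  rw [hpre]
  exact hrestrict (Set.to_countable _).measurableSet

theorem measure_inter_setOf_ne_of_indep {Ω β : Type*} {m₁ m₂ m : MeasurableSpace Ω}
    [MeasurableSpace β] [Countable β] [MeasurableSingletonClass β] {μ : Measure Ω}
    (hm₁ : m₁ ≤ m) (hm₂ : m₂ ≤ m) (hind : Indep m₁ m₂ μ) {X w : Ω → β}
    (hX : Measurable[m₂] X) (hw : Measurable[m₁] w) {E : Set Ω} (hE : MeasurableSet[m₁] E)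
    {q : ℝ≥0∞} (hq : ∀ ω, μ {ω' | X ω' ≠ w ω} = q) :
    μ (E ∩ {ω | X ω ≠ w ω}) = q * μ E := by
  have hEb : ∀ b, MeasurableSet[m₁] (E ∩ w ⁻¹' {b}) := fun b =>
    hE.inter (hw (measurableSet_singleton b))
  have hXb : ∀ b, MeasurableSet[m₂] {ω | X ω ≠ b} := fun b =>
    (hX (measurableSet_singleton b)).compl
  have hdisj : Pairwise (Function.onFun Disjoint fun b => E ∩ w ⁻¹' {b}) := fun b b' hbb' =>
    Set.disjoint_left.mpr fun ω hb hb' => hbb' (hb.2.symm.trans hb'.2)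
  have hterm : ∀ b, μ (E ∩ w ⁻¹' {b} ∩ {ω | X ω ≠ b}) = μ (E ∩ w ⁻¹' {b}) * q := fun b => by
    rw [(Indep_iff _ _ μ).mp hind _ _ (hEb b) (hXb b)]
    rcases (E ∩ w ⁻¹' {b}).eq_empty_or_nonempty with hempty | ⟨ω, -, hω⟩
    · simp [hempty]
    · rw [← hω, hq]
  calc μ (E ∩ {ω | X ω ≠ w ω}) = μ (⋃ b, E ∩ w ⁻¹' {b} ∩ {ω | X ω ≠ b}) := by
        congr 1; ext ω; simp
    _ = ∑' b, μ (E ∩ w ⁻¹' {b}) * q := by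
        rw [measure_iUnion (fun b b' hbb' => (hdisj hbb').mono Set.inter_subset_left
          Set.inter_subset_left) fun b => (hm₁ _ (hEb b)).inter (hm₂ _ (hXb b))]
        exact tsum_congr hterm
    _ = q * μ E := by
        rw [ENNReal.tsum_mul_right, ← measure_iUnion hdisj fun b => hm₁ _ (hEb b), mul_comm,
          ← Set.inter_iUnion, ← Set.preimage_iUnion, Set.iUnion_of_singleton, Set.preimage_univ,
          Set.inter_univ]

lemma measurableSet_forall_Ico_ne_kv (m K : ℕ) :
    MeasurableSet[⨆ i ∈ Set.Iio K, edgeSigma i]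
      {x : EulerPath | ∀ n ∈ Ico m K, (x n : ℕ) ≠ kv x n} := by
  refine (@measurableSet_setOfPred _ (⨆ i ∈ Set.Iio K, edgeSigma i) _).mpr
    (DependsOn.measurable_iSup_comap fun x y h => ?_)
  refine propext (forall₂_congr fun n hn => ?_)
  have hnK : n < K := (mem_Ico.mp hn).2
  have hkv : kv x n = kv y n := dependsOn_kv n fun i hi => h i (hi.trans hnK)
  rw [h n hnK, hkv]

lemma indep_iSup_Iio_edgeSigma (K : ℕ) :
    Indep (⨆ i ∈ Set.Iio K, edgeSigma i) (edgeSigma K) (Measure.infinitePi eulerUniform) :=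
  indep_of_indep_of_le_right
    (indep_iSup_of_disjoint edgeSigma_le iIndep_edgeSigma (T := {K}) (by simp))
    (le_iSup₂ (f := fun i (_ : i ∈ ({K} : Set ℕ)) => edgeSigma i) K rfl)

theorem measure_forall_Ico_ne_kv {m K : ℕ} (hmK : m ≤ K) :
    ((K : ℝ≥0∞) + 1) *
      Measure.infinitePi eulerUniform {x | ∀ n ∈ Ico m K, (x n : ℕ) ≠ kv x n} = m + 1 := by
  induction K, hmK using Nat.le_induction with
  | base => simp
  | succ K hmK ih =>
    have hsucc : {x : EulerPath | ∀ n ∈ Ico m (K + 1), (x n : ℕ) ≠ kv x n} =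
        {x | ∀ n ∈ Ico m K, (x n : ℕ) ≠ kv x n} ∩ {x | (x K : ℕ) ≠ kv x K} := by
      ext x
      simp only [Set.mem_ofPred_eq, Set.mem_inter_iff, mem_Ico]
      refine ⟨fun h => ⟨fun n hn => h n ⟨hn.1, by omega⟩, h K ⟨hmK, by omega⟩⟩,
        fun h n hn => ?_⟩
      rcases Nat.lt_succ_iff_lt_or_eq.mp hn.2 with hn' | rfl
      exacts [h.1 n ⟨hn.1, hn'⟩, h.2]
    have hq : ∀ x : EulerPath, Measure.infinitePi eulerUniform {y | (y K : ℕ) ≠ kv x K} =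
        (K + 1) / (K + 2) := fun x => by
      have hlt : kv x K < K + 2 := (kv_le x K).trans_lt (by omega)
      have : {y : EulerPath | (y K : ℕ) ≠ kv x K} =
          (fun y => y K) ⁻¹' {v | v ≠ ⟨kv x K, hlt⟩} := by
        ext y; simp [Fin.ext_iff]
      rw [this, (measurePreserving_eval_infinitePi eulerUniform K).measure_preimage
        MeasurableSet.of_discrete.nullMeasurableSet, eulerUniform_setOf_ne]
    rw [hsucc, measure_inter_setOf_ne_of_indep (X := fun y => (y K : ℕ))
      (iSup₂_le fun i _ => edgeSigma_le i)
      (edgeSigma_le K) (indep_iSup_Iio_edgeSigma K)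
      ((measurable_of_countable _).comp (comap_measurable _))
      (DependsOn.measurable_iSup_comap (dependsOn_kv K)) (measurableSet_forall_Ico_ne_kv m K) hq,
      ← mul_assoc, ← ih]
    congr 1
    push_cast
    rw [add_assoc, one_add_one_eq_two, ENNReal.mul_div_cancel (by simp) (by simp)]

theorem ae_frequently_val_eq_kv :
    ∀ᵐ x ∂(Measure.infinitePi eulerUniform), ∃ᶠ n in atTop, (x n : ℕ) = kv x n := by
  simp only [Filter.Frequently, not_not, ae_iff, Filter.eventually_atTop, Set.ofPred_exists]
  refine measure_iUnion_null fun m => ?_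
  by_contra hpos
  obtain ⟨K, hK⟩ := ENNReal.exists_nat_mul_gt hpos (b := m + 1) (by simp)
  refine (hK.trans_le ?_).false
  calc (K : ℝ≥0∞) * Measure.infinitePi eulerUniform {x | ∀ n ≥ m, (x n : ℕ) ≠ kv x n}
      ≤ ((K + m : ℕ) + 1) * Measure.infinitePi eulerUniform
          {x | ∀ n ∈ Ico m (K + m), (x n : ℕ) ≠ kv x n} := by
        gcongr
        · exact_mod_cast (by omega : K ≤ K + m + 1)
        · exact fun hn => (mem_Ico.mp hn).1
    _ = m + 1 := measure_forall_Ico_ne_kv (by omega)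

def resetPrefix (N : ℕ) (x : EulerPath) : EulerPath := fun n => if n < N then 0 else x n

lemma resetPrefix_of_le {N n : ℕ} (x : EulerPath) (h : N ≤ n) : resetPrefix N x n = x n :=
  if_neg h.not_gt

lemma kv_resetPrefix_of_le {N n : ℕ} (x : EulerPath) (h : n ≤ N) : kv (resetPrefix N x) n = 0 := by
  induction n with
  | zero => rfl
  | succ n ih =>
    have h0 : resetPrefix N x n = 0 := if_pos (by omega)
    rw [kv_succ, ih (by omega), h0]
    rfl

section sharedEdge

variable {x y : EulerPath} {n : ℕ} (h : x n = y n)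
include h

lemma kv_succ_le_and_sub_le (hle : kv y n ≤ kv x n) :
    kv y (n + 1) ≤ kv x (n + 1) ∧ kv x (n + 1) - kv y (n + 1) ≤ kv x n - kv y n := by
  rw [kv_succ, kv_succ, h]
  split_ifs <;> omega

/-- If `x` takes its largest left edge while `y`, below it, takes the same edge, `y` moves
right and `x` does not: the gap closes by one. -/
lemma kv_succ_sub_lt (hlt : kv y n < kv x n) (htop : (x n : ℕ) = kv x n) :
    kv x (n + 1) - kv y (n + 1) < kv x n - kv y n := by
  rw [kv_succ, kv_succ, ← h, htop]
  split_ifs <;> omega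

end sharedEdge

theorem exists_kv_resetPrefix_eq {x : EulerPath} (hx : ∃ᶠ n in atTop, (x n : ℕ) = kv x n)
    (N : ℕ) : ∃ M, N ≤ M ∧ kv (resetPrefix N x) M = kv x M := by
  set y := resetPrefix N x
  by_contra! hne
  have hle : ∀ M, N ≤ M → kv y M ≤ kv x M := fun M hM => by
    induction M, hM using Nat.le_induction with
    | base => rw [kv_resetPrefix_of_le x le_rfl]; exact Nat.zero_le _
    | succ M hM ih => exact (kv_succ_le_and_sub_le (resetPrefix_of_le x hM).symm ih).1
  let gap : ℕ → ℕ := fun i => kv x (N + i) - kv y (N + i)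
  have hgap : Antitone gap := antitone_nat_of_succ_le fun i =>
    (kv_succ_le_and_sub_le (n := N + i) (resetPrefix_of_le x (Nat.le_add_right N i)).symm
      (hle _ (Nat.le_add_right N i))).2
  obtain ⟨n, hn, htop⟩ := Filter.frequently_atTop.mp hx (N + Function.argmin gap)
  obtain ⟨i, rfl⟩ : ∃ i, n = N + i := ⟨n - N, by omega⟩
  have hdrop : gap (i + 1) < gap i :=
    kv_succ_sub_lt (n := N + i) (resetPrefix_of_le x (Nat.le_add_right N i)).symm
      ((hle _ (Nat.le_add_right N i)).lt_of_ne (hne _ (Nat.le_add_right N i))) htop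
  have := hgap (show Function.argmin gap ≤ i by omega)
  have := Function.argmin_le gap (i + 1)
  omega

section invariant

variable {A : Set EulerPath} (hinv : ∀ x, x ∉ Xmax → (x ∈ A ↔ eulerAdic x ∈ A))
include hinv

theorem ae_mem_iff_resetPrefix_mem (N : ℕ) :
    ∀ᵐ x ∂(Measure.infinitePi eulerUniform), x ∈ A ↔ resetPrefix N x ∈ A := by
  filter_upwards [ae_frequently_val_eq_kv] with x hx
  obtain ⟨M, hNM, hM⟩ := exists_kv_resetPrefix_eq hx N
  exact mem_iff_of_tailEquiv hinv
    ⟨fun n hn => (resetPrefix_of_le x (hNM.trans hn)).symm, hM.symm⟩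

end invariant

lemma measurable_resetPrefix (N : ℕ) : Measurable[⨆ i ≥ N, edgeSigma i] (resetPrefix N) :=
  @measurable_pi_lambda _ _ _ (_) _ _ fun n => by
    by_cases hn : n < N
    · simp only [resetPrefix, if_pos hn]
      exact measurable_const
    · simp only [resetPrefix, if_neg hn]
      exact (comap_measurable _).mono
        (le_iSup₂ (f := fun i (_ : i ≥ N) => edgeSigma i) n (by omega)) le_rfl

lemma measurableSet_limsup_preimage_resetPrefix {A : Set EulerPath} (hA : MeasurableSet A) :
    MeasurableSet[limsup edgeSigma atTop] (limsup (fun N => resetPrefix N ⁻¹' A) atTop) := by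
  rw [limsup_eq_iInf_iSup_of_nat, MeasurableSpace.measurableSet_iInf]
  intro n
  rw [← limsup_nat_add _ n]
  exact @MeasurableSet.measurableSet_limsup _ (⨆ i ≥ n, edgeSigma i) _ fun N =>
    (measurable_resetPrefix (N + n)).mono (biSup_mono fun i hi => by omega) le_rfl hA

/-- **Ergodicity of the Euler adic.** The Euler adic transformation `T` is ergodic with
respect to the symmetric measure `η`: every Borel set `A` that is invariant under `T`
(off the set of maximal paths) has measure `0` or `1`. -/
theorem euler_adic_ergodic
    (η : Measure EulerPath) (hη : IsSymmetricMeasure η)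
    (A : Set EulerPath) (hA : MeasurableSet A)
    (hinv : ∀ x, x ∉ Xmax → (x ∈ A ↔ eulerAdic x ∈ A)) :
    η A = 0 ∨ η A = 1 := by
  obtain rfl := hη.eq_infinitePi
  have hA_tail : A =ᵐ[Measure.infinitePi eulerUniform]
      (limsup (fun N => resetPrefix N ⁻¹' A) atTop : Set EulerPath) := by
    filter_upwards [ae_all_iff.mpr (ae_mem_iff_resetPrefix_mem hinv)] with x hx
    change (x ∈ A) = (x ∈ (limsup (fun N => resetPrefix N ⁻¹' A) atTop : Set EulerPath))
    simp only [mem_limsup_iff_frequently_mem, Set.mem_preimage, ← hx, frequently_const]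
  rw [measure_congr hA_tail]
  exact measure_zero_or_one_of_measurableSet_limsup_atTop edgeSigma_le iIndep_edgeSigma
    (measurableSet_limsup_preimage_resetPrefix hA)
end

section
/- (Proposition 2.) For ρ-almost every pair (x,x') ∈ X × X, the set {n ∈ ℕ : k_n(x) = k_n(x')} is infinite; that is, almost every pair of paths passes through a common vertex of the Euler graph at infinitely many levels. -/
/-!
Write `D_n = k_n(x) - k_n(x')`. From vertex `(n, k)` a uniformly chosen edge turns right with
probability `(n + 1 - k) / (n + 2)`, so `E[k_{n+1} | F_n] = (n + 1) (k_n + 1) / (n + 2)` and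
`(n + 1) D_n` is a martingale. Since `D` moves by at most one per step, it cannot change sign
without vanishing; hence, if `τ` is the first meeting time after `N`, `(n + 1) |D_{n ∧ τ}|` is a
martingale too, and `ρ(τ > M) ≤ E |D_{M ∧ τ}| ≤ N (N + 1) / (M + 1) → 0`. Under `ρ` the prefixes
of length `M` of the two paths are uniform and independent, so all these expectations are finite
averages over pairs of path prefixes.
-/

open MeasureTheory Filter
open scoped ENNReal

lemma Int.abs_eq_sign_mul_of_abs_sub_le_one {a b : ℤ} (ha : a ≠ 0) (h : |b - a| ≤ 1) :
    |b| = a.sign * b := by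
  rw [abs_le] at h
  rcases ha.lt_or_gt with ha | ha
  · rw [Int.sign_eq_neg_one_of_neg ha, abs_of_nonpos (by omega)]; ring
  · rw [Int.sign_eq_one_of_pos ha, abs_of_nonneg (by omega)]; ring

namespace EulerPath

open Function Finset

lemma kv_le (x : EulerPath) : ∀ n, kv x n ≤ n
  | 0 => le_rfl
  | n + 1 => by have := kv_le x n; rw [kv]; split_ifs <;> omega

lemma kv_congr {x y : EulerPath} : ∀ {n}, (∀ i < n, x i = y i) → kv x n = kv y n
  | 0, _ => rfl
  | n + 1, h => by
    rw [kv, kv, kv_congr fun i hi => h i (by omega), h n n.lt_succ_self]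

lemma kv_update_of_le (x : EulerPath) {M n : ℕ} (a : Fin (M + 2)) (h : n ≤ M) :
    kv (update x M a) n = kv x n :=
  kv_congr fun i hi => update_of_ne (by omega) _ _

lemma kv_update_succ (x : EulerPath) (M : ℕ) (a : Fin (M + 2)) :
    kv (update x M a) (M + 1) = kv x M + if kv x M < a then 1 else 0 := by
  rw [kv, kv_update_of_le x a le_rfl, update_self]
  split_ifs <;> omega

lemma sum_kv_update (x : EulerPath) (M : ℕ) :
    ∑ a : Fin (M + 2), kv (update x M a) (M + 1) = (M + 1) * (kv x M + 1) := by
  have hk := kv_le x M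
  have hcard : #{a : Fin (M + 2) | kv x M < a} = M + 1 - kv x M := by
    rw [show ({a : Fin (M + 2) | kv x M < a} : Finset _) = Ioi ⟨kv x M, by omega⟩ by
      ext a; simp [Fin.lt_def], Fin.card_Ioi]
    dsimp only
    omega
  simp only [kv_update_succ, sum_add_distrib, sum_boole, hcard, sum_const, card_univ,
    Fintype.card_fin, smul_eq_mul, Nat.cast_id]
  zify [hk.trans M.le_succ]
  ring

def gap (x y : EulerPath) (n : ℕ) : ℤ := kv x n - kv y n

lemma gap_ne_zero_iff {x y : EulerPath} {n : ℕ} : gap x y n ≠ 0 ↔ kv x n ≠ kv y n := by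
  simp [gap, sub_eq_zero]

lemma abs_gap_le (x y : EulerPath) (n : ℕ) : |gap x y n| ≤ n := by
  have := kv_le x n
  have := kv_le y n
  rw [gap, abs_le]
  omega

lemma gap_update_succ (x y : EulerPath) (M : ℕ) (a b : Fin (M + 2)) :
    gap (update x M a) (update y M b) (M + 1)
      = gap x y M + (if kv x M < a then 1 else 0) - (if kv y M < b then 1 else 0) := by
  simp only [gap, kv_update_succ]
  push_cast
  ring

lemma abs_gap_update_succ_sub_le (x y : EulerPath) (M : ℕ) (a b : Fin (M + 2)) :
    |gap (update x M a) (update y M b) (M + 1) - gap x y M| ≤ 1 := by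
  rw [gap_update_succ, abs_le]
  split_ifs <;> omega

lemma sum_gap_update (x y : EulerPath) (M : ℕ) :
    ∑ a : Fin (M + 2), ∑ b : Fin (M + 2), gap (update x M a) (update y M b) (M + 1)
      = (M + 1) * (M + 2) * gap x y M := by
  have hx := congrArg (Nat.cast : ℕ → ℤ) (sum_kv_update x M)
  have hy := congrArg (Nat.cast : ℕ → ℤ) (sum_kv_update y M)
  push_cast at hx hy
  simp only [gap, sum_sub_distrib, sum_const, card_univ, Fintype.card_fin, nsmul_eq_mul,
    ← mul_sum, hx, hy]
  push_cast
  ring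

def Apart (N M : ℕ) (x y : EulerPath) : Prop := ∀ n ∈ Icc N M, kv x n ≠ kv y n

instance (N M : ℕ) (x y : EulerPath) : Decidable (Apart N M x y) :=
  inferInstanceAs (Decidable (∀ n ∈ Icc N M, kv x n ≠ kv y n))

lemma apart_update_succ_iff {N M : ℕ} (hNM : N ≤ M + 1) (x y : EulerPath) (a b : Fin (M + 2)) :
    Apart N (M + 1) (update x M a) (update y M b)
      ↔ Apart N M x y ∧ gap (update x M a) (update y M b) (M + 1) ≠ 0 := by
  simp only [Apart, mem_Icc, gap_ne_zero_iff]
  constructor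
  · intro h
    refine ⟨fun n hn => ?_, h (M + 1) ⟨hNM, le_rfl⟩⟩
    rw [← kv_update_of_le x a hn.2, ← kv_update_of_le y b hn.2]
    exact h n ⟨hn.1, hn.2.trans M.le_succ⟩
  · rintro ⟨h, hM⟩ n hn
    rcases hn.2.lt_or_eq with hn' | rfl
    · rw [kv_update_of_le x a (by omega), kv_update_of_le y b (by omega)]
      exact h n ⟨hn.1, by omega⟩
    · exact hM

/-- `|D_{M ∧ τ}|` for the gap `D = kv x - kv y` and the first meeting time `τ ≥ N`:
since `D_τ = 0`, stopping at `τ` kills the gap from then on. -/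
def stoppedAbsGap (N M : ℕ) (x y : EulerPath) : ℤ := if Apart N M x y then |gap x y M| else 0

lemma sum_stoppedAbsGap_update {N M : ℕ} (hNM : N ≤ M) (x y : EulerPath) :
    ∑ a : Fin (M + 2), ∑ b : Fin (M + 2), stoppedAbsGap N (M + 1) (update x M a) (update y M b)
      = (M + 1) * (M + 2) * stoppedAbsGap N M x y := by
  by_cases h : Apart N M x y
  · have hM : gap x y M ≠ 0 := gap_ne_zero_iff.2 (h M (mem_Icc.2 ⟨hNM, le_rfl⟩))
    -- a walk with unit steps keeps its sign until it hits zero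
    have hterm : ∀ a b, stoppedAbsGap N (M + 1) (update x M a) (update y M b)
        = (gap x y M).sign * gap (update x M a) (update y M b) (M + 1) := by
      intro a b
      rw [← Int.abs_eq_sign_mul_of_abs_sub_le_one hM (abs_gap_update_succ_sub_le x y M a b)]
      by_cases h' : gap (update x M a) (update y M b) (M + 1) = 0
      · simp [stoppedAbsGap, h']
      · rw [stoppedAbsGap,
          if_pos ((apart_update_succ_iff (hNM.trans M.le_succ) x y a b).2 ⟨h, h'⟩)]
    calc _ = (gap x y M).sign * ∑ a, ∑ b, gap (update x M a) (update y M b) (M + 1) := by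
          simp only [hterm, mul_sum]
      _ = _ := by
          rw [sum_gap_update, stoppedAbsGap, if_pos h, ← Int.sign_mul_self_eq_abs]
          ring
  · simp [stoppedAbsGap, apart_update_succ_iff (hNM.trans M.le_succ), h]

end EulerPath

abbrev PathPrefix (M : ℕ) : Type := ∀ i : Fin M, Fin (i + 2)

def EulerPath.trunc (M : ℕ) (x : EulerPath) : PathPrefix M := fun i => x i

namespace PathPrefix

open Function Finset EulerPath

def toPath {M : ℕ} (c : PathPrefix M) : EulerPath := fun n => if h : n < M then c ⟨n, h⟩ else 0

lemma toPath_trunc_apply (x : EulerPath) {M n : ℕ} (h : n < M) : (trunc M x).toPath n = x n := by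
  simp [toPath, trunc, h]

lemma kv_toPath_trunc {M n : ℕ} (x : EulerPath) (h : n ≤ M) :
    kv (trunc M x).toPath n = kv x n :=
  kv_congr fun _ hi => toPath_trunc_apply x (hi.trans_le h)

lemma trunc_eq_iff {M : ℕ} {x : EulerPath} {c : PathPrefix M} :
    trunc M x = c ↔ ∀ n < M, x n = c.toPath n := by
  simp only [funext_iff, Fin.forall_iff, toPath, trunc]
  exact forall₂_congr fun n h => by simp [h]

lemma toPath_snoc {M : ℕ} (c : PathPrefix M) (a : Fin (M + 2)) :
    toPath (Fin.snoc (α := fun i : Fin (M + 1) => Fin (i + 2)) c a) = update c.toPath M a := by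
  funext n
  rcases lt_trichotomy n M with h | rfl | h
  · rw [update_of_ne h.ne]
    simp only [toPath, dif_pos h, dif_pos (h.trans M.lt_succ_self)]
    exact Fin.snoc_castSucc (α := fun i : Fin (M + 1) => Fin (i + 2)) a c ⟨n, h⟩
  · rw [update_self]
    simp only [toPath, dif_pos n.lt_succ_self]
    exact Fin.snoc_last (α := fun i : Fin (n + 1) => Fin (i + 2)) a c
  · rw [update_of_ne h.ne']
    simp only [toPath, dif_neg h.not_gt, dif_neg (show ¬n < M + 1 by omega)]

lemma card_eq (M : ℕ) : Fintype.card (PathPrefix M) = ∏ i ∈ range M, (i + 2) := by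
  simp only [Fintype.card_pi, Fintype.card_fin]
  exact Fin.prod_univ_eq_prod_range (fun i => i + 2) M

lemma card_succ (M : ℕ) :
    Fintype.card (PathPrefix (M + 1)) = Fintype.card (PathPrefix M) * (M + 2) := by
  rw [card_eq, card_eq, prod_range_succ]

lemma sum_succ {β : Type*} [AddCommMonoid β] (M : ℕ) (F : EulerPath → β) :
    ∑ c : PathPrefix (M + 1), F c.toPath
      = ∑ c : PathPrefix M, ∑ a : Fin (M + 2), F (update c.toPath M a) := by
  rw [← (Fin.snocEquiv fun i : Fin (M + 1) => Fin (i + 2)).sum_comp, Fintype.sum_prod_type,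
    sum_comm]
  exact sum_congr rfl fun c _ => sum_congr rfl fun a _ => congrArg F (toPath_snoc c a)

lemma sum_pair_succ {β : Type*} [AddCommMonoid β] (M : ℕ) (F : EulerPath → EulerPath → β) :
    ∑ c : PathPrefix (M + 1), ∑ d : PathPrefix (M + 1), F c.toPath d.toPath
      = ∑ c : PathPrefix M, ∑ d : PathPrefix M, ∑ a : Fin (M + 2), ∑ b : Fin (M + 2),
          F (update c.toPath M a) (update d.toPath M b) := by
  rw [sum_succ M fun x => ∑ d : PathPrefix (M + 1), F x d.toPath]
  simp only [sum_succ M (F _)]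
  exact sum_congr rfl fun c _ => sum_comm

end PathPrefix

namespace EulerPath

open Finset PathPrefix

lemma stoppedAbsGap_nonneg (N M : ℕ) (x y : EulerPath) : 0 ≤ stoppedAbsGap N M x y := by
  unfold stoppedAbsGap; split_ifs <;> simp

lemma stoppedAbsGap_le (N M : ℕ) (x y : EulerPath) : stoppedAbsGap N M x y ≤ M := by
  unfold stoppedAbsGap; split_ifs
  · exact abs_gap_le x y M
  · positivity

lemma one_le_stoppedAbsGap {N M : ℕ} (hNM : N ≤ M) {x y : EulerPath} (h : Apart N M x y) :
    1 ≤ stoppedAbsGap N M x y := by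
  rw [stoppedAbsGap, if_pos h]
  exact Int.one_le_abs (gap_ne_zero_iff.2 (h M (mem_Icc.2 ⟨hNM, le_rfl⟩)))

def stoppedGapSum (N M : ℕ) : ℤ :=
  ∑ c : PathPrefix M, ∑ d : PathPrefix M, stoppedAbsGap N M c.toPath d.toPath

lemma stoppedGapSum_succ {N M : ℕ} (hNM : N ≤ M) :
    stoppedGapSum N (M + 1) = (M + 1) * (M + 2) * stoppedGapSum N M := by
  simp only [stoppedGapSum, sum_pair_succ M (stoppedAbsGap N (M + 1)),
    sum_stoppedAbsGap_update hNM, mul_sum]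

lemma stoppedGapSum_self_le (N : ℕ) :
    stoppedGapSum N N ≤ N * Fintype.card (PathPrefix N) ^ 2 :=
  calc stoppedGapSum N N ≤ ∑ _c : PathPrefix N, ∑ _d : PathPrefix N, (N : ℤ) :=
        sum_le_sum fun c _ => sum_le_sum fun d _ => stoppedAbsGap_le N N _ _
    _ = N * Fintype.card (PathPrefix N) ^ 2 := by
        simp only [sum_const, card_univ, nsmul_eq_mul]
        ring

lemma succ_mul_stoppedGapSum_le {N M : ℕ} (hNM : N ≤ M) :
    (M + 1) * stoppedGapSum N M ≤ N * (N + 1) * Fintype.card (PathPrefix M) ^ 2 := by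
  induction M, hNM using Nat.le_induction with
  | base =>
    calc (N + 1) * stoppedGapSum N N ≤ (N + 1) * (N * Fintype.card (PathPrefix N) ^ 2) := by
          gcongr
          exact stoppedGapSum_self_le N
      _ = _ := by ring
  | succ M hNM ih =>
    rw [stoppedGapSum_succ hNM, card_succ]
    push_cast
    calc ((M : ℤ) + 1 + 1) * ((M + 1) * (M + 2) * stoppedGapSum N M)
        = (M + 2) ^ 2 * ((M + 1) * stoppedGapSum N M) := by ring
      _ ≤ (M + 2) ^ 2 * (N * (N + 1) * Fintype.card (PathPrefix M) ^ 2) := by gcongr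
      _ = _ := by ring

def apartPairs (N M : ℕ) : Finset (PathPrefix M × PathPrefix M) :=
  {ω | Apart N M ω.1.toPath ω.2.toPath}

lemma card_apartPairs_le {N M : ℕ} (hNM : N ≤ M) :
    (M + 1) * #(apartPairs N M) ≤ N * (N + 1) * Fintype.card (PathPrefix M) ^ 2 := by
  have hcard : (#(apartPairs N M) : ℤ) ≤ stoppedGapSum N M := by
    rw [card_eq_sum_ones, apartPairs, sum_filter, stoppedGapSum, ← Fintype.sum_prod_type']
    push_cast
    gcongr with ω
    split_ifs with h
    · exact one_le_stoppedAbsGap hNM h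
    · exact stoppedAbsGap_nonneg N M _ _
  have := succ_mul_stoppedGapSum_le hNM
  zify
  nlinarith

end EulerPath

namespace IsSymmetricMeasure

open Finset EulerPath PathPrefix

variable {η : Measure EulerPath}

lemma measure_trunc_preimage_singleton (hη : IsSymmetricMeasure η) {M : ℕ} (c : PathPrefix M) :
    η (trunc M ⁻¹' {c}) = (Fintype.card (PathPrefix M) : ℝ≥0∞)⁻¹ := by
  have hcyl : trunc M ⁻¹' {c} = {x | ∀ i < M, x i = c.toPath i} := by
    ext x
    exact trunc_eq_iff
  rw [hcyl, hη.2, card_eq]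
  push_cast
  refine (ENNReal.prod_inv_distrib fun _ _ _ _ _ => Or.inr ?_).symm
  simp

lemma measure_prod_trunc_preimage (hη : IsSymmetricMeasure η) {M : ℕ}
    (S : Finset (PathPrefix M × PathPrefix M)) :
    (η.prod η) (Prod.map (trunc M) (trunc M) ⁻¹' S)
      = #S / (Fintype.card (PathPrefix M) : ℝ≥0∞) ^ 2 := by
  have := hη.1
  have hmeas : Measurable (trunc M) := measurable_pi_lambda _ fun i => measurable_pi_apply _
  rw [← sum_measure_preimage_singleton S fun ω _ =>
    (hmeas.prodMap hmeas) (measurableSet_singleton ω)]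
  have hfiber : ∀ ω : PathPrefix M × PathPrefix M,
      (η.prod η) (Prod.map (trunc M) (trunc M) ⁻¹' {ω})
        = ((Fintype.card (PathPrefix M) : ℝ≥0∞)⁻¹) ^ 2 := by
    rintro ⟨c, d⟩
    rw [← Set.singleton_prod_singleton, Set.preimage_prod_map_prod, Measure.prod_prod,
      measure_trunc_preimage_singleton hη, measure_trunc_preimage_singleton hη, sq]
  rw [sum_congr rfl fun ω _ => hfiber ω, sum_const, nsmul_eq_mul, ← ENNReal.inv_pow,
    div_eq_mul_inv]

lemma measure_prod_apart_after_le (hη : IsSymmetricMeasure η) {N M : ℕ} (hNM : N ≤ M) :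
    (η.prod η) {p | ∀ n, N ≤ n → kv p.1 n ≠ kv p.2 n}
      ≤ (N * (N + 1) : ℕ) / ((M + 1 : ℕ) : ℝ≥0∞) := by
  have hcard : (Fintype.card (PathPrefix M) : ℝ≥0∞) ^ 2 ≠ 0 :=
    pow_ne_zero 2 (Nat.cast_ne_zero.2 Fintype.card_ne_zero)
  calc _ ≤ (η.prod η) (Prod.map (trunc M) (trunc M) ⁻¹' (apartPairs N M)) := by
        refine measure_mono fun p hp => ?_
        rw [Set.mem_preimage, mem_coe, apartPairs, mem_filter]
        refine ⟨mem_univ _, fun n hn => ?_⟩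
        rw [Prod.map_fst, Prod.map_snd, kv_toPath_trunc _ (mem_Icc.1 hn).2,
          kv_toPath_trunc _ (mem_Icc.1 hn).2]
        exact hp n (mem_Icc.1 hn).1
    _ = _ := measure_prod_trunc_preimage hη _
    _ ≤ _ := by
        rw [ENNReal.div_le_iff hcard (ENNReal.pow_ne_top (ENNReal.natCast_ne_top _)),
          ← ENNReal.mul_div_right_comm,
          ENNReal.le_div_iff_mul_le (Or.inl (by simp)) (Or.inl (by simp)), mul_comm]
        exact_mod_cast card_apartPairs_le hNM

lemma measure_prod_apart_after_eq_zero (hη : IsSymmetricMeasure η) (N : ℕ) :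
    (η.prod η) {p | ∀ n, N ≤ n → kv p.1 n ≠ kv p.2 n} = 0 := by
  have hlim : Tendsto (fun M : ℕ => ((N * (N + 1) : ℕ) : ℝ≥0∞) / ((M + 1 : ℕ) : ℝ≥0∞))
      atTop (nhds 0) := by
    simpa using ENNReal.Tendsto.const_div
      (ENNReal.tendsto_nat_nhds_top.comp (tendsto_add_atTop_nat 1))
      (Or.inr (ENNReal.natCast_ne_top (N * (N + 1))))
  exact le_antisymm
    (ge_of_tendsto hlim (eventually_atTop.2 ⟨N, fun M => hη.measure_prod_apart_after_le⟩))
    zero_le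

end IsSymmetricMeasure

/-- **Proposition 2.** For `ρ`-almost every pair `(x,x')` (where `ρ = η × η`), the two
paths pass through a common vertex of the Euler graph at infinitely many levels:
`{n : k_n(x) = k_n(x')}` is infinite. -/
theorem euler_paths_meet_infinitely_often
    (η : Measure EulerPath) (hη : IsSymmetricMeasure η) :
    ∀ᵐ p ∂(η.prod η), {n : ℕ | kv p.1 n = kv p.2 n}.Infinite := by
  simp_rw [← Nat.frequently_atTop_iff_infinite, frequently_atTop]
  refine ae_all_iff.2 fun N => ?_
  rw [ae_iff]
  simpa only [not_exists, not_and] using hη.measure_prod_apart_after_eq_zero N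
end

section
/- For every n ≥ 1, the variance of u_n under η is ∫_X u_n² dη = (n+2)/3 (and ∫_X u_n dη = 0). -/
/-
Since `k_n` only depends on the first `n` coordinates, which are uniformly distributed under
`η`, summing over the `n+2` choices of the next edge shows that `k_n` is a Markov chain: from
`k` at level `n` it stays at `k` with probability `(k+1)/(n+2)` and moves to `k+1` otherwise.
Applying this transition to `u` and `u²` gives `E u_{n+1} = (n+1)/(n+2) · E u_n` and
`E u_{n+1}² = (n · E u_n² + n + 2)/(n+2)`, and both formulas follow by induction from `u_0 = 0`.
-/

open MeasureTheory Filter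
open scoped ENNReal

/-- `u_n = 2 k_n - n` (an integer, viewed in `ℝ`). -/
def u (n : ℕ) (x : EulerPath) : ℝ :=
  ((2 * (kv x n : ℤ) - (n : ℤ) : ℤ) : ℝ)

abbrev EulerPrefix (n : ℕ) : Type := ∀ i : Fin n, Fin (i + 2)

def toPrefix (n : ℕ) (x : EulerPath) : EulerPrefix n := fun i => x i

def kvPrefix : ∀ n : ℕ, EulerPrefix n → ℕ
  | 0, _ => 0
  | n + 1, p =>
    let k := kvPrefix n (Fin.init p)
    if (p (Fin.last n) : ℕ) ≤ k then k else k + 1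

theorem kv_eq_kvPrefix_toPrefix (x : EulerPath) : ∀ n : ℕ, kv x n = kvPrefix n (toPrefix n x)
  | 0 => rfl
  | n + 1 => by rw [kv, kvPrefix, kv_eq_kvPrefix_toPrefix x n]; rfl

theorem kvPrefix_le : ∀ (n : ℕ) (p : EulerPrefix n), kvPrefix n p ≤ n
  | 0, _ => le_rfl
  | n + 1, p => by
    have := kvPrefix_le n (Fin.init p)
    rw [kvPrefix]
    split <;> omega

theorem kvPrefix_snoc (n : ℕ) (p : EulerPrefix n) (a : Fin (n + 2)) :
    kvPrefix (n + 1) (Fin.snoc p a) =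
      if (a : ℕ) ≤ kvPrefix n p then kvPrefix n p else kvPrefix n p + 1 := by
  simp only [kvPrefix, Fin.init_snoc, Fin.snoc_last]

theorem card_eulerPrefix_succ (n : ℕ) :
    Fintype.card (EulerPrefix (n + 1)) = (n + 2) * Fintype.card (EulerPrefix n) := by
  rw [← Fintype.card_congr (Fin.snocEquiv _), Fintype.card_prod, Fintype.card_fin]
  rfl

theorem sum_eulerPrefix_succ {M : Type*} [AddCommMonoid M] (n : ℕ)
    (F : EulerPrefix (n + 1) → M) :
    ∑ p, F p = ∑ p : EulerPrefix n, ∑ a : Fin (n + 2), F (Fin.snoc p a) := by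
  rw [← (Fin.snocEquiv _).sum_comp, Fintype.sum_prod_type_right]
  rfl

theorem sum_fin_ite_le {M : Type*} [AddCommMonoid M] {n k : ℕ} (hk : k ≤ n) (F : ℕ → M) :
    ∑ a : Fin (n + 2), F (if (a : ℕ) ≤ k then k else k + 1) =
      (k + 1) • F k + (n + 1 - k) • F (k + 1) := by
  rw [Fin.sum_univ_eq_sum_range (fun j => F (if j ≤ k then k else k + 1)),
    show n + 2 = (k + 1) + (n + 1 - k) by omega, Finset.sum_range_add]
  congr 1
  · rw [Finset.sum_congr rfl fun j hj => by rw [if_pos (by simp at hj; omega)]]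
    simp
  · rw [Finset.sum_congr rfl fun j _ => by rw [if_neg (by omega)]]
    simp

noncomputable def eulerStep (n : ℕ) (f : ℕ → ℝ) (k : ℕ) : ℝ :=
  ((k + 1) * f k + (n + 1 - k) * f (k + 1)) / (n + 2)

theorem sum_kvPrefix_succ (n : ℕ) (f : ℕ → ℝ) :
    ∑ p : EulerPrefix (n + 1), f (kvPrefix (n + 1) p) =
      (n + 2) * ∑ p : EulerPrefix n, eulerStep n f (kvPrefix n p) := by
  rw [sum_eulerPrefix_succ, Finset.mul_sum]
  refine Finset.sum_congr rfl fun p _ => ?_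
  have hk := kvPrefix_le n p
  simp only [kvPrefix_snoc, sum_fin_ite_le hk, eulerStep, nsmul_eq_mul]
  rw [Nat.cast_sub (by omega)]
  push_cast
  field_simp

theorem measurable_toPrefix (n : ℕ) : Measurable (toPrefix n) :=
  measurable_pi_lambda _ fun i => measurable_pi_apply (i : ℕ)

theorem u_eq (n : ℕ) (x : EulerPath) : u n x = 2 * kv x n - n := by
  simp [u]

namespace IsSymmetricMeasure

variable {η : Measure EulerPath}

theorem measure_toPrefix_preimage_singleton (hη : IsSymmetricMeasure η) {n : ℕ}
    (p : EulerPrefix n) :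
    η (toPrefix n ⁻¹' {p}) = (Fintype.card (EulerPrefix n) : ℝ≥0∞)⁻¹ := by
  let c : EulerPath := fun m => if h : m < n then p ⟨m, h⟩ else 0
  have hcylinder : toPrefix n ⁻¹' {p} = {x | ∀ i < n, x i = c i} := by
    ext x
    simp only [Set.mem_preimage, Set.mem_singleton_iff, funext_iff, toPrefix, Set.mem_ofPred_eq, c]
    exact ⟨fun h i hi => by rw [dif_pos hi]; exact h ⟨i, hi⟩,
      fun h i => by simpa [dif_pos i.isLt] using h i i.isLt⟩
  rw [hcylinder, hη.2 n c, ← ENNReal.prod_inv_distrib fun i _ j _ _ => Or.inr (by simp),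
    Fintype.card_pi, Nat.cast_prod, ← Fin.prod_univ_eq_prod_range (fun i => (i : ℝ≥0∞) + 2)]
  simp

theorem map_toPrefix (hη : IsSymmetricMeasure η) (n : ℕ) :
    η.map (toPrefix n) = (PMF.uniformOfFintype (EulerPrefix n)).toMeasure := by
  refine Measure.ext_of_singleton fun p => ?_
  rw [Measure.map_apply (measurable_toPrefix n) (measurableSet_singleton p),
    PMF.toMeasure_apply_singleton _ _ (measurableSet_singleton p), PMF.uniformOfFintype_apply,
    hη.measure_toPrefix_preimage_singleton]

theorem integral_comp_toPrefix (hη : IsSymmetricMeasure η) {n : ℕ} (g : EulerPrefix n → ℝ) :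
    ∫ x, g (toPrefix n x) ∂η = (∑ p, g p) / Fintype.card (EulerPrefix n) := by
  rw [← integral_map (measurable_toPrefix n).aemeasurable (by fun_prop), hη.map_toPrefix,
    PMF.integral_eq_sum]
  simp only [PMF.uniformOfFintype_apply, ENNReal.toReal_inv, ENNReal.toReal_natCast, smul_eq_mul,
    ← Finset.mul_sum, div_eq_inv_mul]

theorem integrable_comp_kv (hη : IsSymmetricMeasure η) (n : ℕ) (g : ℕ → ℝ) :
    Integrable (fun x => g (kv x n)) η := by
  have := hη.1
  simp_rw [kv_eq_kvPrefix_toPrefix]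
  exact Integrable.of_finite.comp_measurable (g := g ∘ kvPrefix n) (measurable_toPrefix n)

theorem integral_kv_succ (hη : IsSymmetricMeasure η) (n : ℕ) (f : ℕ → ℝ) :
    ∫ x, f (kv x (n + 1)) ∂η = ∫ x, eulerStep n f (kv x n) ∂η := by
  simp_rw [kv_eq_kvPrefix_toPrefix]
  rw [hη.integral_comp_toPrefix (fun p => f (kvPrefix (n + 1) p)),
    hη.integral_comp_toPrefix (fun p => eulerStep n f (kvPrefix n p)), sum_kvPrefix_succ,
    card_eulerPrefix_succ]
  push_cast
  rw [mul_div_mul_left _ _ (by positivity)]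

theorem integral_u_succ (hη : IsSymmetricMeasure η) (n : ℕ) :
    ∫ x, u (n + 1) x ∂η = (n + 1) / (n + 2) * ∫ x, u n x ∂η := by
  have hstep (k : ℕ) :
      eulerStep n (fun k => 2 * k - (n + 1 : ℕ)) k = (n + 1) / (n + 2) * (2 * k - n) := by
    simp only [eulerStep]
    push_cast
    field_simp
    ring
  simp only [u_eq]
  rw [hη.integral_kv_succ n (fun k => 2 * k - (n + 1 : ℕ))]
  simp only [hstep, integral_const_mul]

theorem integral_u_sq_succ (hη : IsSymmetricMeasure η) (n : ℕ) :
    ∫ x, u (n + 1) x ^ 2 ∂η = (n * ∫ x, u n x ^ 2 ∂η + (n + 2)) / (n + 2) := by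
  have := hη.1
  have hstep (k : ℕ) :
      eulerStep n (fun k => (2 * k - (n + 1 : ℕ)) ^ 2) k = n / (n + 2) * (2 * k - n) ^ 2 + 1 := by
    simp only [eulerStep]
    push_cast
    field_simp
    ring
  simp only [u_eq]
  rw [hη.integral_kv_succ n (fun k => (2 * k - (n + 1 : ℕ)) ^ 2)]
  simp only [hstep]
  rw [integral_add ((hη.integrable_comp_kv n fun k => (2 * k - n : ℝ) ^ 2).const_mul _)
    (integrable_const _), integral_const_mul, integral_const, probReal_univ, one_smul]
  field_simp

end IsSymmetricMeasure

/-- For every `n ≥ 1`, the mean of `u_n` under `η` is `0` and its variance is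
`∫ u_n² dη = (n+2)/3`. -/
theorem euler_u_variance
    (η : Measure EulerPath) (hη : IsSymmetricMeasure η) (n : ℕ) (hn : 1 ≤ n) :
    (∫ x, (u n x) ^ 2 ∂η = ((n : ℝ) + 2) / 3) ∧ (∫ x, u n x ∂η = 0) := by
  have hu₀ (x : EulerPath) : u 0 x = 0 := by simp [u, kv]
  have mean (m : ℕ) : ∫ x, u m x ∂η = 0 := by
    induction m with
    | zero => simp [hu₀]
    | succ m ih => rw [hη.integral_u_succ, ih, mul_zero]
  have variance (m : ℕ) (hm : 1 ≤ m) : ∫ x, u m x ^ 2 ∂η = ((m : ℝ) + 2) / 3 := by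
    induction m, hm using Nat.le_induction with
    | base => norm_num [hη.integral_u_sq_succ 0, hu₀]
    | succ m _ ih =>
      rw [hη.integral_u_sq_succ, ih]
      push_cast
      field_simp
      ring
  exact ⟨variance n hn, mean n⟩
end

section
/- (Lemma 2.) The sequence k_n(x)/n converges to 1/2 in η-measure: for every ε > 0, η({x ∈ X : |k_n(x)/n − 1/2| ≥ ε}) → 0 as n → ∞. -/
open MeasureTheory Filter
open scoped ENNReal

/-!
Under `η` the first `n` labels are uniformly distributed over the `(n+1)!` admissible prefixes,
and given `k_n = k` the next step stays at `k` with probability `(k+1)/(n+2)` and moves to `k+1`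
otherwise. Hence
`E[(k_{n+1} - (n+1)/2)²] = n/(n+2) · E[(k_n - n/2)²] + 1/4`,
so `E[(k_n - n/2)²] ≤ n/4`, and Chebyshev's inequality gives
`η {|k_n/n - 1/2| ≥ ε} ≤ 1/(4ε²n)`.
-/

lemma Fin.sum_ite_val_le {M : Type*} [AddCommMonoid M] {n k : ℕ} (hk : k ≤ n) (u v : M) :
    ∑ a : Fin (n + 2), (if (a : ℕ) ≤ k then u else v) = (k + 1) • u + (n + 1 - k) • v := by
  simp_rw [Nat.le_iff_lt_add_one]
  have hcard := Finset.card_filter_add_card_filter_not (s := Finset.univ)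
    fun a : Fin (n + 2) => (a : ℕ) < k + 1
  rw [Fin.card_filter_val_lt, Finset.card_univ, Fintype.card_fin] at hcard
  rw [Finset.sum_ite, Finset.sum_const, Finset.sum_const, Fin.card_filter_val_lt]
  congr 2 <;> omega

namespace EulerPrefix

def label : {n : ℕ} → EulerPrefix n → ℕ
  | 0, _ => 0
  | n + 1, c =>
    let k := label (n := n) (Fin.init c)
    if (c (Fin.last n) : ℕ) ≤ k then k else k + 1

lemma label_snoc {n : ℕ} (c : EulerPrefix n) (a : Fin (n + 2)) :
    label (Fin.snoc (α := fun i : Fin (n + 1) => Fin (i + 2)) c a : EulerPrefix (n + 1)) =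
      if (a : ℕ) ≤ label c then label c else label c + 1 := by
  simp [label]

lemma label_le {n : ℕ} (c : EulerPrefix n) : label c ≤ n := by
  induction n with
  | zero => exact le_rfl
  | succ n ih => simp only [label]; split <;> grind

def extend {n : ℕ} (c : EulerPrefix n) : EulerPath :=
  fun i => if h : i < n then c ⟨i, h⟩ else 0

lemma sum_succ {M : Type*} [AddCommMonoid M] (n : ℕ) (g : EulerPrefix (n + 1) → M) :
    ∑ c, g c = ∑ c : EulerPrefix n, ∑ a : Fin (n + 2),
      g (Fin.snoc (α := fun i : Fin (n + 1) => Fin (i + 2)) c a) := by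
  rw [← (Fin.snocEquiv fun i : Fin (n + 1) => Fin (i + 2)).sum_comp,
    Fintype.sum_prod_type_right]
  rfl

lemma card_succ (n : ℕ) :
    Fintype.card (EulerPrefix (n + 1)) = (n + 2) * Fintype.card (EulerPrefix n) := by
  simp only [Fintype.card_pi, Fin.prod_univ_castSucc, Fintype.card_fin, Fin.val_castSucc,
    Fin.val_last]
  ring

lemma prod_inv_eq_inv_card (n : ℕ) :
    ∏ i ∈ Finset.range n, ((i : ℝ≥0∞) + 2)⁻¹ = (Fintype.card (EulerPrefix n) : ℝ≥0∞)⁻¹ := by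
  rw [← ENNReal.prod_inv_distrib fun _ _ _ _ _ => Or.inr (by simp), Fintype.card_pi,
    Fin.prod_univ_eq_prod_range (fun i => Fintype.card (Fin (i + 2)))]
  simp

lemma sum_comp_label_succ {M : Type*} [AddCommMonoid M] (n : ℕ) (f : ℕ → M) :
    ∑ c : EulerPrefix (n + 1), f (label c) =
      ∑ c : EulerPrefix n,
        ((label c + 1) • f (label c) + (n + 1 - label c) • f (label c + 1)) := by
  rw [sum_succ]
  refine Finset.sum_congr rfl fun c _ => ?_
  simp only [label_snoc, apply_ite f]
  exact Fin.sum_ite_val_le (label_le c) _ _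

lemma sum_sq_label_sub_half_succ (n : ℕ) :
    ∑ c : EulerPrefix (n + 1), ((label c : ℝ) - ((n + 1 : ℕ) : ℝ) / 2) ^ 2 =
      (n : ℝ) * ∑ c : EulerPrefix n, ((label c : ℝ) - n / 2) ^ 2 +
        ((n : ℝ) + 2) / 4 * Fintype.card (EulerPrefix n) := by
  rw [sum_comp_label_succ n fun k => ((k : ℝ) - ((n + 1 : ℕ) : ℝ) / 2) ^ 2, Finset.mul_sum,
    Fintype.card_eq_sum_ones, Nat.cast_sum, Finset.mul_sum, ← Finset.sum_add_distrib]
  refine Finset.sum_congr rfl fun c _ => ?_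
  -- with `d = k - n/2`: `(k+1)(d - 1/2)² + (n+1-k)(d + 1/2)² = n d² + (n+2)/4`
  simp only [nsmul_eq_mul, Nat.cast_sub (by have := label_le c; omega : label c ≤ n + 1)]
  push_cast
  ring

lemma sum_sq_label_sub_half_le (n : ℕ) :
    ∑ c : EulerPrefix n, ((label c : ℝ) - n / 2) ^ 2 ≤
      (n : ℝ) / 4 * Fintype.card (EulerPrefix n) := by
  induction n with
  | zero => simp [label]
  | succ n ih =>
    rw [sum_sq_label_sub_half_succ, card_succ]
    push_cast
    nlinarith [mul_le_mul_of_nonneg_left ih (Nat.cast_nonneg n : (0 : ℝ) ≤ n)]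

end EulerPrefix

namespace EulerPath

def restrict (n : ℕ) (x : EulerPath) : EulerPrefix n := fun i => x i

lemma measurable_restrict (n : ℕ) : Measurable (restrict n) :=
  measurable_pi_lambda _ fun _ => measurable_pi_apply _

lemma preimage_restrict_singleton {n : ℕ} (c : EulerPrefix n) :
    restrict n ⁻¹' {c} = {x | ∀ i < n, x i = c.extend i} := by
  ext x
  simp only [Set.mem_preimage, Set.mem_singleton_iff, Set.mem_ofPred_eq, funext_iff,
    restrict, EulerPrefix.extend]
  exact ⟨fun h i hi => by simpa [hi] using h ⟨i, hi⟩, fun h i => by simpa using h i i.isLt⟩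

end EulerPath

lemma kv_eq_label_restrict (x : EulerPath) (n : ℕ) : kv x n = (x.restrict n).label := by
  induction n with
  | zero => rfl
  | succ n ih => simp only [kv, EulerPrefix.label, ih]; rfl

lemma measurable_kv (n : ℕ) : Measurable fun x : EulerPath => kv x n := by
  simp_rw [kv_eq_label_restrict]
  exact (measurable_of_finite _).comp (EulerPath.measurable_restrict n)

namespace IsSymmetricMeasure

variable {η : Measure EulerPath}

lemma measure_preimage_restrict (hη : IsSymmetricMeasure η) {n : ℕ} (c : EulerPrefix n) :
    η (EulerPath.restrict n ⁻¹' {c}) = (Fintype.card (EulerPrefix n) : ℝ≥0∞)⁻¹ := by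
  rw [EulerPath.preimage_restrict_singleton, hη.2, EulerPrefix.prod_inv_eq_inv_card]

lemma lintegral_comp_restrict (hη : IsSymmetricMeasure η) (n : ℕ) (g : EulerPrefix n → ℝ≥0∞) :
    ∫⁻ x, g (x.restrict n) ∂η = (∑ c, g c) / Fintype.card (EulerPrefix n) := by
  have hmeas := EulerPath.measurable_restrict n
  rw [← lintegral_map (measurable_of_finite g) hmeas, lintegral_fintype, ENNReal.div_eq_inv_mul,
    Finset.mul_sum]
  refine Finset.sum_congr rfl fun c _ => ?_
  rw [Measure.map_apply hmeas (measurableSet_singleton c), hη.measure_preimage_restrict, mul_comm]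

lemma lintegral_sq_kv_sub_half_le (hη : IsSymmetricMeasure η) (n : ℕ) :
    ∫⁻ x, ENNReal.ofReal (((kv x n : ℝ) - n / 2) ^ 2) ∂η ≤ ENNReal.ofReal (n / 4) := by
  have hcard : (0 : ℝ) < Fintype.card (EulerPrefix n) := by exact_mod_cast Fintype.card_pos
  simp_rw [kv_eq_label_restrict]
  rw [hη.lintegral_comp_restrict n fun c => ENNReal.ofReal (((c.label : ℝ) - n / 2) ^ 2),
    ← ENNReal.ofReal_sum_of_nonneg fun _ _ => sq_nonneg _, ← ENNReal.ofReal_natCast,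
    ← ENNReal.ofReal_div_of_pos hcard]
  exact ENNReal.ofReal_le_ofReal
    ((div_le_iff₀ hcard).2 (EulerPrefix.sum_sq_label_sub_half_le n))

lemma measure_le_abs_kv_div_sub_half_le (hη : IsSymmetricMeasure η) {ε : ℝ} (hε : 0 < ε)
    {n : ℕ} (hn : 0 < n) :
    η {x | ε ≤ |(kv x n : ℝ) / n - 1 / 2|} ≤ ENNReal.ofReal ((4 * ε ^ 2)⁻¹ / n) := by
  have hεn : 0 < (ε * n) ^ 2 := by positivity
  have hsq (x : EulerPath) (hx : ε ≤ |(kv x n : ℝ) / n - 1 / 2|) :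
      (ε * n) ^ 2 ≤ ((kv x n : ℝ) - n / 2) ^ 2 := by
    have : (kv x n : ℝ) - n / 2 = n * ((kv x n : ℝ) / n - 1 / 2) := by field_simp
    rw [this, mul_comm ε, mul_pow, mul_pow, ← sq_abs ((kv x n : ℝ) / n - 1 / 2)]
    gcongr
  have hmeas : Measurable fun x => ENNReal.ofReal (((kv x n : ℝ) - n / 2) ^ 2) := by
    have := measurable_kv n
    fun_prop
  calc η {x | ε ≤ |(kv x n : ℝ) / n - 1 / 2|}
      ≤ η {x | ENNReal.ofReal ((ε * n) ^ 2) ≤ ENNReal.ofReal (((kv x n : ℝ) - n / 2) ^ 2)} :=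
        measure_mono fun x hx => ENNReal.ofReal_le_ofReal (hsq x hx)
    _ ≤ (∫⁻ x, ENNReal.ofReal (((kv x n : ℝ) - n / 2) ^ 2) ∂η) /
          ENNReal.ofReal ((ε * n) ^ 2) :=
        meas_ge_le_lintegral_div hmeas.aemeasurable (ENNReal.ofReal_pos.2 hεn).ne'
          ENNReal.ofReal_ne_top
    _ ≤ ENNReal.ofReal (n / 4) / ENNReal.ofReal ((ε * n) ^ 2) :=
        ENNReal.div_le_div_right (hη.lintegral_sq_kv_sub_half_le n) _
    _ = ENNReal.ofReal ((4 * ε ^ 2)⁻¹ / n) := by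
        rw [← ENNReal.ofReal_div_of_pos hεn]
        congr 1
        field_simp

end IsSymmetricMeasure

/-- **Lemma 2.** `k_n/n → 1/2` in `η`-measure: for every `ε > 0`,
`η {x : |k_n(x)/n - 1/2| ≥ ε} → 0` as `n → ∞`. -/
theorem euler_kn_over_n_tendsto_half_in_measure
    (η : Measure EulerPath) (hη : IsSymmetricMeasure η) (ε : ℝ) (hε : 0 < ε) :
    Tendsto (fun n => η {x | ε ≤ |(kv x n : ℝ) / (n : ℝ) - 1 / 2|}) atTop
      (nhds 0) := by
  have hbound : Tendsto (fun n : ℕ => ENNReal.ofReal ((4 * ε ^ 2)⁻¹ / n)) atTop (nhds 0) := by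
    simpa only [ENNReal.ofReal_zero] using
      ENNReal.tendsto_ofReal (tendsto_const_div_atTop_nhds_zero_nat (4 * ε ^ 2)⁻¹)
  refine tendsto_of_tendsto_of_tendsto_of_le_of_le' tendsto_const_nhds hbound
    (Eventually.of_forall fun _ => zero_le) ?_
  filter_upwards [eventually_gt_atTop 0] with n hn
  exact hη.measure_le_abs_kv_div_sub_half_le hε hn
end
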